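/- arXiv:1510.05990 — 3 statements merged into one kernel-verified Lean document; each statement's English description precedes it below -/
import Mathlib

section
/- If (L,·) is a σ-generalized right Bol loop, then x^λ = x^ρ for all x ∈ L, i.e., left and right inverses coincide. -/
/-- A loop: a quasigroup with two-sided identity. -/
class MyLoop (L : Type*) extends Mul L, One L where
  one_mul : ∀ a : L, 1 * a = a
  mul_one : ∀ a : L, a * 1 = a
  ldiv : L → L → L
  rdiv : L → L → L
  mul_ldiv : ∀ a b : L, a * ldiv a b = b
  ldiv_mul : ∀ a b : L, ldiv a (a * b) = b
  rdiv_mul : ∀ a b : L, rdiv a b * b = a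
  mul_rdiv : ∀ a b : L, rdiv (a * b) b = a

namespace MyLoop

variable {L : Type*} [MyLoop L]

/-- right inverse: `x * rho x = 1` -/
def rho (x : L) : L := ldiv x 1

/-- left inverse: `lam x * x = 1` -/
def lam (x : L) : L := rdiv 1 x

/-- right translation `R_a : y ↦ y * a`, as a bijection -/
def Rt (a : L) : Equiv.Perm L :=
  ⟨fun y => y * a, fun y => rdiv y a, fun y => mul_rdiv y a, fun y => rdiv_mul y a⟩

/-- left translation `L_a : y ↦ a * y`, as a bijection -/
def Lt (a : L) : Equiv.Perm L :=
  ⟨fun y => a * y, fun y => ldiv a y, fun y => ldiv_mul a y, fun y => mul_ldiv a y⟩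

/-- σ-generalized (right) Bol loop identity -/
def GBol (σ : L → L) : Prop := ∀ x y z : L, ((x * y) * z) * σ y = x * ((y * z) * σ y)

/-- σ-generalized left Bol loop identity -/
def LBol (σ : L → L) : Prop := ∀ x y z : L, σ y * (z * (y * x)) = (σ y * (z * y)) * x

/-- σ-M-loop identity -/
def MLoopP (σ : L → L) : Prop := ∀ x y z : L, (x * y) * (z * σ x) = (x * (y * z)) * σ x

/-- right inverse property -/
def RIP (L : Type*) [MyLoop L] : Prop := ∀ x y : L, (y * x) * rho x = y

/-- left inverse property -/
def LIP (L : Type*) [MyLoop L] : Prop := ∀ x y : L, lam x * (x * y) = y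

/-- right nucleus -/
def Nrho (L : Type*) [MyLoop L] : Set L := {a | ∀ y z : L, (z * y) * a = z * (y * a)}

/-- middle nucleus -/
def Nmu (L : Type*) [MyLoop L] : Set L := {a | ∀ y z : L, (z * a) * y = z * (a * y)}

/-- multiplication of the A-holomorph `H = A × L`, `(α,x)∘(β,y) = (αβ, xβ · y)` -/
def hmul (A : Subgroup (MulAut L)) (p q : ↥A × L) : ↥A × L :=
  (p.1 * q.1, (q.1 : MulAut L) p.2 * q.2)

/-- the right inverse of an element of the holomorph -/
def hrho (A : Subgroup (MulAut L)) (p : ↥A × L) : ↥A × L :=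
  (p.1⁻¹, rho ((p.1⁻¹ : MulAut L) p.2))

/-- the holomorph is a σ'-generalized Bol loop, where `σ'(α,x) = (α, σ x)` -/
def HGBol (A : Subgroup (MulAut L)) (σ : L → L) : Prop :=
  ∀ p q r : ↥A × L,
    hmul A (hmul A (hmul A p q) r) (q.1, σ q.2) =
      hmul A p (hmul A (hmul A q r) (q.1, σ q.2))

end MyLoop

open MyLoop

namespace MyLoop

variable {L : Type*} [MyLoop L]

theorem lam_mul_self (x : L) : lam x * x = 1 := rdiv_mul 1 x

theorem mul_rho_self (x : L) : x * rho x = 1 := mul_ldiv x 1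

theorem mul_left_injective (a : L) : Function.Injective (· * a) := fun b c hbc => by
  rw [← mul_rdiv b a, ← mul_rdiv c a]
  exact congrArg (rdiv · a) hbc

end MyLoop

/-- in a σ-generalized right Bol loop, left and right inverses coincide. -/
theorem gbol_lam_eq_rho {L : Type*} [MyLoop L] (σ : L → L) (h : GBol σ) :
    ∀ x : L, lam x = rho x := by
  intro x
  -- The Bol identity at `(lam x, x, rho x)` collapses to `rho x * σ x = lam x * σ x`.
  have key := h (lam x) x (rho x)
  rw [lam_mul_self, mul_rho_self, MyLoop.one_mul, MyLoop.one_mul] at key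
  exact (MyLoop.mul_left_injective (σ x) key).symm
end

section
/- A loop (L,·) with the left inverse property that is a σ-generalized right Bol loop is a σ-M-loop. -/
open MyLoop

/-!
In a loop with the left inverse property, `lam` is a two-sided inverse and an involution.
Taking `z = lam y` in the Bol identity gives `(x * y) * lam y = x`, whence
`lam (x * y) * x = lam y`. Substituting `lam (x * y), x, y * z` into the Bol identity then yields
`z * σ x = lam (x * y) * ((x * (y * z)) * σ x)`, and left multiplication by `x * y` undoes
`lam (x * y)`.
-/

namespace MyLoop

variable {L : Type*} [MyLoop L]

protected theorem mul_left_cancel {a b c : L} (h : a * b = a * c) : b = c := by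
  rw [← ldiv_mul a b, h, ldiv_mul]

protected theorem mul_right_cancel {a b c : L} (h : b * a = c * a) : b = c := by
  rw [← mul_rdiv b a, h, mul_rdiv]

theorem mul_lam_self (hlip : LIP L) (x : L) : x * lam x = 1 :=
  MyLoop.mul_left_cancel (a := lam x) <| by rw [hlip, MyLoop.mul_one]

theorem lam_lam (hlip : LIP L) (x : L) : lam (lam x) = x :=
  MyLoop.mul_right_cancel (a := lam x) <| by rw [lam_mul_self, mul_lam_self hlip]

theorem mul_lam_mul (hlip : LIP L) (x y : L) : x * (lam x * y) = y := by
  simpa only [lam_lam hlip] using hlip (lam x) y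

theorem mul_mul_lam_of_gBol (hlip : LIP L) {σ : L → L} (h : GBol σ) (x y : L) :
    x * y * lam y = x :=
  MyLoop.mul_right_cancel (a := σ y) <| by
    rw [h, mul_lam_self hlip, MyLoop.one_mul]

theorem lam_mul_mul_of_gBol (hlip : LIP L) {σ : L → L} (h : GBol σ) (x y : L) :
    lam (x * y) * x = lam y := by
  simpa only [mul_mul_lam_of_gBol hlip h] using hlip (x * y) (lam y)

end MyLoop

/-- a LIP loop that is a σ-generalized right Bol loop is a σ-M-loop. -/
theorem lip_gbol_mloop {L : Type*} [MyLoop L] (σ : L → L) (hlip : LIP L) (h : GBol σ) :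
    MLoopP σ := by
  intro x y z
  have hbol : z * σ x = lam (x * y) * (x * (y * z) * σ x) := by
    simpa only [lam_mul_mul_of_gBol hlip h, hlip y z] using h (lam (x * y)) x (y * z)
  rw [hbol, mul_lam_mul hlip]
end

section
/- Let (Q,·) be a RIP loop with self map σ whose A-holomorph (with σ'(α,x) = (α,σ(x))) is a σ'-generalized Bol loop. Then for all x ∈ Q and γ ∈ A(Q): R_{σ(x)}^{-1} R_{σ(xγ^{-1})} = R_{σ(x)^{-1}σ(xγ^{-1})}, i.e., y·σ(x)^{-1}·σ(xγ^{-1}) computed as (yR_{σ(x)}^{-1})·σ(xγ^{-1}) equals y·(σ(x)^{-1}·σ(xγ^{-1})) for all y ∈ Q. -/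
open MyLoop

/-!
With trivial automorphism components in the first two arguments, the σ'-Bol identity of the
holomorph says that `Q` is a `σ ∘ δ⁻¹`-generalized Bol loop for every `δ ∈ A`. In a RIP loop, a
`τ`-Bol identity gives `y R_{τ x}⁻¹ = (y x) w` with `x w = (τ x)⁻¹`; a second, `τ'`-Bol identity
then rewrites `((y x) w) τ' x` as `y ((τ x)⁻¹ τ' x)`. Take `τ = σ` and `τ' = σ ∘ γ⁻¹`.
-/

namespace MyLoop

variable {L : Type*} [MyLoop L]

theorem rho_mul_self (hrip : RIP L) (a : L) : rho a * a = 1 := by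
  have hlam : lam a * a = 1 := rdiv_mul 1 a
  have hlam_eq : lam a = rho a := by
    simpa only [hlam, MyLoop.one_mul] using (hrip a (lam a)).symm
  rw [← hlam_eq, hlam]

theorem GBol.rdiv_apply {τ : L → L} (hτ : GBol τ) (hrip : RIP L) (x y : L) :
    rdiv y (τ x) = (y * x) * ldiv x (rho (τ x)) := by
  have hy : ((y * x) * ldiv x (rho (τ x))) * τ x = y := by
    rw [hτ, mul_ldiv, rho_mul_self hrip, MyLoop.mul_one]
  conv_lhs => rw [← hy]
  exact mul_rdiv _ _

theorem GBol.rdiv_mul_eq_mul_rho_mul {τ τ' : L → L} (hτ : GBol τ) (hτ' : GBol τ') (hrip : RIP L)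
    (x y : L) : rdiv y (τ x) * τ' x = y * (rho (τ x) * τ' x) := by
  rw [hτ.rdiv_apply hrip, hτ', mul_ldiv]

theorem HGBol.gbol_inv_apply {A : Subgroup (MulAut L)} {σ : L → L} (h : HGBol A σ)
    {δ : MulAut L} (hδ : δ ∈ A) : GBol fun y => σ (δ⁻¹ y) := by
  intro x y z
  have hsnd := congrArg Prod.snd (h (1, δ⁻¹ x) (1, δ⁻¹ y) (⟨δ, hδ⟩, z))
  simpa [hmul, map_mul] using hsnd

end MyLoop

/-- if the A-holomorph of a RIP loop is a σ'-generalized Bol loop,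
then `R_{σ(x)}⁻¹ R_{σ(xγ⁻¹)} = R_{σ(x)⁻¹·σ(xγ⁻¹)}` for all `x ∈ Q`, `γ ∈ A(Q)`. -/
theorem holomorph_gbol_translation {L : Type*} [MyLoop L] (σ : L → L)
    (A : Subgroup (MulAut L)) (hrip : RIP L) (h : HGBol A σ) :
    ∀ (x : L) (γ : ↥A), ∀ y : L,
      (Rt (σ x)).symm y * σ ((γ⁻¹ : MulAut L) x) =
        y * (rho (σ x) * σ ((γ⁻¹ : MulAut L) x)) := by
  intro x γ y
  have hσ : GBol σ := by simpa using h.gbol_inv_apply A.one_mem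
  exact hσ.rdiv_mul_eq_mul_rho_mul (h.gbol_inv_apply γ.2) hrip x y
end
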